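/- For every four-qubit pure state |ψ⟩ and every permutation (i,j,k,l) of (1,2,3,4), the two-versus-two bipartition concurrences satisfy C_{ij|kl} ≤ C_{ik|lj} + C_{il|jk}, where C_{ab|cd} = √(2(1 − tr(ρ_{ab}²))) and ρ_{ab} is the reduced density matrix of qubits a and b. -/

import Mathlib

open scoped BigOperators

noncomputable section

/-- A four-qubit pure state amplitude function on the computational basis. -/
abbrev QState := Fin 2 → Fin 2 → Fin 2 → Fin 2 → ℂ

/-- Reduced density matrix of qubit 1. -/
def rho1 (ψ : QState) (a b : Fin 2) : ℂ := ∑ i, ∑ j, ∑ k, ψ a i j k * star (ψ b i j k)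
/-- Reduced density matrix of qubit 2. -/
def rho2 (ψ : QState) (a b : Fin 2) : ℂ := ∑ i, ∑ j, ∑ k, ψ i a j k * star (ψ i b j k)
/-- Reduced density matrix of qubit 3. -/
def rho3 (ψ : QState) (a b : Fin 2) : ℂ := ∑ i, ∑ j, ∑ k, ψ i j a k * star (ψ i j b k)
/-- Reduced density matrix of qubit 4. -/
def rho4 (ψ : QState) (a b : Fin 2) : ℂ := ∑ i, ∑ j, ∑ k, ψ i j k a * star (ψ i j k b)

/-- tr(ρ²) for a one-qubit density matrix. -/
def purity1 (ρ : Fin 2 → Fin 2 → ℂ) : ℂ := ∑ a, ∑ b, ρ a b * ρ b a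

/-- Reduced density matrix of qubits 1,2. -/
def rho12 (ψ : QState) (a b : Fin 2 × Fin 2) : ℂ :=
  ∑ i, ∑ j, ψ a.1 a.2 i j * star (ψ b.1 b.2 i j)
/-- Reduced density matrix of qubits 1,3. -/
def rho13 (ψ : QState) (a b : Fin 2 × Fin 2) : ℂ :=
  ∑ i, ∑ j, ψ a.1 i a.2 j * star (ψ b.1 i b.2 j)
/-- Reduced density matrix of qubits 1,4. -/
def rho14 (ψ : QState) (a b : Fin 2 × Fin 2) : ℂ :=
  ∑ i, ∑ j, ψ a.1 i j a.2 * star (ψ b.1 i j b.2)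

/-- tr(ρ²) for a two-qubit density matrix. -/
def purity2 (ρ : Fin 2 × Fin 2 → Fin 2 × Fin 2 → ℂ) : ℂ := ∑ a, ∑ b, ρ a b * ρ b a

/-- The concurrence across a two-two bipartition, from tr(ρ²). -/
def conc2 (ψ : QState) (ρ : QState → (Fin 2 × Fin 2) → (Fin 2 × Fin 2) → ℂ) : ℝ :=
  Real.sqrt (2 * (1 - (purity2 (ρ ψ)).re))

abbrev Q2 := Fin 2 × Fin 2
abbrev PP := (Q2 × Q2) × (Q2 × Q2)

def mygram (f : Q2 → Q2 → ℂ) (p : PP) : ℂ :=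
  f p.1.1 p.1.2 * f p.2.1 p.2.2 - f p.1.1 p.2.2 * f p.2.1 p.1.2

lemma key (f : Q2 → Q2 → ℂ) (hS : ∑ i, ∑ j, Complex.normSq (f i j) = 1) :
    2 * (1 - (∑ a, ∑ b, (∑ j, f a j * star (f b j)) * (∑ l, f b l * star (f a l))).re)
    = ∑ p : PP, Complex.normSq (mygram f p) := by
  have hR : ∑ p : PP, Complex.normSq (mygram f p)
      = ∑ i, ∑ j, ∑ k, ∑ l, Complex.normSq (f i j * f k l - f i l * f k j) := by
    simp [Fintype.sum_prod_type, mygram]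
  have hA : ∑ i, ∑ j, ∑ k, ∑ l, Complex.normSq (f i j) * Complex.normSq (f k l) = 1 := by
    simp_rw [← Finset.mul_sum, ← Finset.sum_mul, hS, one_mul]
  have hB : ∑ i, ∑ j, ∑ k, ∑ l, Complex.normSq (f i l) * Complex.normSq (f k j) = 1 := by
    rw [← hA]
    refine Finset.sum_congr rfl fun i _ => ?_
    calc ∑ j, ∑ k, ∑ l, Complex.normSq (f i l) * Complex.normSq (f k j)
        = ∑ k, ∑ j, ∑ l, Complex.normSq (f i l) * Complex.normSq (f k j) := Finset.sum_comm
      _ = ∑ k, ∑ j, ∑ l, Complex.normSq (f i j) * Complex.normSq (f k l) :=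
          Finset.sum_congr rfl fun k _ => Finset.sum_comm
      _ = ∑ j, ∑ k, ∑ l, Complex.normSq (f i j) * Complex.normSq (f k l) := Finset.sum_comm
  have hCc : ∑ i, ∑ j, ∑ k, ∑ l, f i j * f k l * (starRingEnd ℂ) (f i l * f k j)
      = ∑ a, ∑ b, (∑ j, f a j * star (f b j)) * (∑ l, f b l * star (f a l)) := by
    refine Finset.sum_congr rfl fun i _ => ?_
    rw [Finset.sum_comm]
    refine Finset.sum_congr rfl fun k _ => ?_
    rw [Finset.sum_mul_sum]
    refine Finset.sum_congr rfl fun j _ => Finset.sum_congr rfl fun l _ => ?_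
    simp only [starRingEnd_apply, star_mul']
    ring
  have hC : ∑ i, ∑ j, ∑ k, ∑ l, (f i j * f k l * (starRingEnd ℂ) (f i l * f k j)).re
      = (∑ a, ∑ b, (∑ j, f a j * star (f b j)) * (∑ l, f b l * star (f a l))).re := by
    rw [← hCc]
    simp [Complex.re_sum]
  have expand : ∑ i, ∑ j, ∑ k, ∑ l, Complex.normSq (f i j * f k l - f i l * f k j)
      = (∑ i, ∑ j, ∑ k, ∑ l, Complex.normSq (f i j) * Complex.normSq (f k l))
      + (∑ i, ∑ j, ∑ k, ∑ l, Complex.normSq (f i l) * Complex.normSq (f k j))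
      - 2 * (∑ i, ∑ j, ∑ k, ∑ l, (f i j * f k l * (starRingEnd ℂ) (f i l * f k j)).re) := by
    simp only [Complex.normSq_sub, Complex.normSq_mul, Finset.sum_add_distrib,
      Finset.sum_sub_distrib, Finset.mul_sum]
  rw [hR, expand, hA, hB, hC]
  ring

def f12 (ψ : QState) (i j : Q2) : ℂ := ψ i.1 i.2 j.1 j.2
def f13 (ψ : QState) (i j : Q2) : ℂ := ψ i.1 j.1 i.2 j.2
def f14 (ψ : QState) (i j : Q2) : ℂ := ψ i.1 j.1 j.2 i.2

lemma sqrt_triangle (g h k : PP → ℂ) (he : ∀ p, g p = h p + k p) :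
    Real.sqrt (∑ p, Complex.normSq (g p)) ≤
      Real.sqrt (∑ p, Complex.normSq (h p)) + Real.sqrt (∑ p, Complex.normSq (k p)) := by
  have norm_eq : ∀ u : PP → ℂ,
      Real.sqrt (∑ p, Complex.normSq (u p)) = ‖(WithLp.equiv 2 (PP → ℂ)).symm u‖ := by
    intro u
    rw [EuclideanSpace.norm_eq]
    congr 1
    refine Finset.sum_congr rfl fun p _ => ?_
    rw [WithLp.equiv_symm_apply, PiLp.toLp_apply, ← Complex.sq_norm]
  have hgk : (WithLp.equiv 2 (PP → ℂ)).symm g =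
      (WithLp.equiv 2 (PP → ℂ)).symm h + (WithLp.equiv 2 (PP → ℂ)).symm k := by
    ext p
    exact he p
  rw [norm_eq g, norm_eq h, norm_eq k, hgk]
  exact norm_add_le _ _

theorem stmt18 (ψ : QState)
    (hnorm : ∑ a, ∑ b, ∑ c, ∑ d, Complex.normSq (ψ a b c d) = 1) :
    conc2 ψ rho12 ≤ conc2 ψ rho13 + conc2 ψ rho14 ∧
    conc2 ψ rho13 ≤ conc2 ψ rho12 + conc2 ψ rho14 ∧
    conc2 ψ rho14 ≤ conc2 ψ rho12 + conc2 ψ rho13 := by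
  -- norm conditions
  have hS12 : ∑ i, ∑ j, Complex.normSq (f12 ψ i j) = 1 := by
    simpa [f12, Fintype.sum_prod_type] using hnorm
  have hS13 : ∑ i, ∑ j, Complex.normSq (f13 ψ i j) = 1 := by
    rw [← hnorm]
    simp only [f13, Fintype.sum_prod_type]
    exact Finset.sum_congr rfl fun a _ => Finset.sum_comm
  have hS14 : ∑ i, ∑ j, Complex.normSq (f14 ψ i j) = 1 := by
    rw [← hnorm]
    simp only [f14, Fintype.sum_prod_type]
    refine Finset.sum_congr rfl fun a _ => ?_
    rw [Finset.sum_comm]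
    refine Finset.sum_congr rfl fun b _ => ?_
    exact Finset.sum_comm
  -- purity identifications
  have hp12 : purity2 (rho12 ψ) =
      ∑ a, ∑ b, (∑ j, f12 ψ a j * star (f12 ψ b j)) * (∑ l, f12 ψ b l * star (f12 ψ a l)) := by
    simp [purity2, rho12, f12, Fintype.sum_prod_type]
  have hp13 : purity2 (rho13 ψ) =
      ∑ a, ∑ b, (∑ j, f13 ψ a j * star (f13 ψ b j)) * (∑ l, f13 ψ b l * star (f13 ψ a l)) := by
    simp [purity2, rho13, f13, Fintype.sum_prod_type]
  have hp14 : purity2 (rho14 ψ) =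
      ∑ a, ∑ b, (∑ j, f14 ψ a j * star (f14 ψ b j)) * (∑ l, f14 ψ b l * star (f14 ψ a l)) := by
    simp [purity2, rho14, f14, Fintype.sum_prod_type]
  have hc12 : conc2 ψ rho12 = Real.sqrt (∑ p : PP, Complex.normSq (mygram (f12 ψ) p)) := by
    rw [conc2, hp12, key _ hS12]
  have hc13 : conc2 ψ rho13 = Real.sqrt (∑ p : PP, Complex.normSq (mygram (f13 ψ) p)) := by
    rw [conc2, hp13, key _ hS13]
  have hc14 : conc2 ψ rho14 = Real.sqrt (∑ p : PP, Complex.normSq (mygram (f14 ψ) p)) := by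
    rw [conc2, hp14, key _ hS14]
  -- reindexing equivs
  let e13 : PP ≃ PP := Equiv.mk
    (fun p => (((p.1.1.1, p.1.2.1), (p.1.1.2, p.1.2.2)), ((p.2.1.1, p.2.2.1), (p.2.1.2, p.2.2.2))))
    (fun p => (((p.1.1.1, p.1.2.1), (p.1.1.2, p.1.2.2)), ((p.2.1.1, p.2.2.1), (p.2.1.2, p.2.2.2))))
    (fun p => rfl) (fun p => rfl)
  let e14 : PP ≃ PP := Equiv.mk
    (fun p => (((p.1.1.1, p.1.2.2), (p.1.1.2, p.1.2.1)), ((p.2.1.1, p.2.2.2), (p.2.1.2, p.2.2.1))))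
    (fun p => (((p.1.1.1, p.1.2.1), (p.1.2.2, p.1.1.2)), ((p.2.1.1, p.2.2.1), (p.2.2.2, p.2.1.2))))
    (fun p => rfl) (fun p => rfl)
  -- τ : swap b ↔ b', d ↔ d'
  let τ : PP ≃ PP := Equiv.mk
    (fun p => (((p.1.1.1, p.2.1.2), (p.1.2.1, p.2.2.2)), ((p.2.1.1, p.1.1.2), (p.2.2.1, p.1.2.2))))
    (fun p => (((p.1.1.1, p.2.1.2), (p.1.2.1, p.2.2.2)), ((p.2.1.1, p.1.1.2), (p.2.2.1, p.1.2.2))))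
    (fun p => rfl) (fun p => rfl)
  -- τ₂ : swap (c,d) ↔ (c',d')
  let τ₂ : PP ≃ PP := Equiv.mk
    (fun p => ((p.1.1, p.2.2), (p.2.1, p.1.2)))
    (fun p => ((p.1.1, p.2.2), (p.2.1, p.1.2)))
    (fun p => rfl) (fun p => rfl)
  have sum13 : ∀ (σ : PP ≃ PP), ∑ p : PP, Complex.normSq (mygram (f13 ψ) (σ p))
      = ∑ p : PP, Complex.normSq (mygram (f13 ψ) p) :=
    fun σ => σ.sum_comp (fun p => Complex.normSq (mygram (f13 ψ) p))
  have sum14 : ∀ (σ : PP ≃ PP), ∑ p : PP, Complex.normSq (mygram (f14 ψ) (σ p))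
      = ∑ p : PP, Complex.normSq (mygram (f14 ψ) p) :=
    fun σ => σ.sum_comp (fun p => Complex.normSq (mygram (f14 ψ) p))
  have sum12 : ∀ (σ : PP ≃ PP), ∑ p : PP, Complex.normSq (mygram (f12 ψ) (σ p))
      = ∑ p : PP, Complex.normSq (mygram (f12 ψ) p) :=
    fun σ => σ.sum_comp (fun p => Complex.normSq (mygram (f12 ψ) p))
  -- pointwise identities
  have id1 : ∀ p : PP, mygram (f12 ψ) p
      = mygram (f13 ψ) (e13 p) + mygram (f14 ψ) (e14 (τ p)) := by
    rintro ⟨⟨⟨a, b⟩, ⟨c, d⟩⟩, ⟨⟨a', b'⟩, ⟨c', d'⟩⟩⟩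
    simp only [mygram, f12, f13, f14, e13, e14, τ, Equiv.coe_fn_mk]
    ring
  have id2 : ∀ p : PP, mygram (f13 ψ) (e13 p)
      = mygram (f12 ψ) p + mygram (f14 ψ) (e14 (τ₂ p)) := by
    rintro ⟨⟨⟨a, b⟩, ⟨c, d⟩⟩, ⟨⟨a', b'⟩, ⟨c', d'⟩⟩⟩
    simp only [mygram, f12, f13, f14, e13, e14, τ₂, Equiv.coe_fn_mk]
    ring
  have id3 : ∀ p : PP, mygram (f14 ψ) (e14 p)
      = mygram (f12 ψ) p + mygram (f13 ψ) (e13 (τ₂ p)) := by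
    rintro ⟨⟨⟨a, b⟩, ⟨c, d⟩⟩, ⟨⟨a', b'⟩, ⟨c', d'⟩⟩⟩
    simp only [mygram, f12, f13, f14, e13, e14, τ₂, Equiv.coe_fn_mk]
    ring
  refine ⟨?_, ?_, ?_⟩
  · rw [hc12, hc13, hc14]
    have := sqrt_triangle (mygram (f12 ψ)) (fun p => mygram (f13 ψ) (e13 p))
      (fun p => mygram (f14 ψ) (e14 (τ p))) id1
    rwa [sum13 e13, show ∑ p : PP, Complex.normSq (mygram (f14 ψ) (e14 (τ p)))
        = ∑ p : PP, Complex.normSq (mygram (f14 ψ) p) from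
      (τ.trans e14).sum_comp (fun p => Complex.normSq (mygram (f14 ψ) p))] at this
  · rw [hc12, hc13, hc14, ← sum13 e13]
    have := sqrt_triangle (fun p => mygram (f13 ψ) (e13 p)) (mygram (f12 ψ))
      (fun p => mygram (f14 ψ) (e14 (τ₂ p))) id2
    rwa [show ∑ p : PP, Complex.normSq (mygram (f14 ψ) (e14 (τ₂ p)))
        = ∑ p : PP, Complex.normSq (mygram (f14 ψ) p) from
      (τ₂.trans e14).sum_comp (fun p => Complex.normSq (mygram (f14 ψ) p))] at this
  · rw [hc12, hc13, hc14, ← sum14 e14]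
    have := sqrt_triangle (fun p => mygram (f14 ψ) (e14 p)) (mygram (f12 ψ))
      (fun p => mygram (f13 ψ) (e13 (τ₂ p))) id3
    rwa [show ∑ p : PP, Complex.normSq (mygram (f13 ψ) (e13 (τ₂ p)))
        = ∑ p : PP, Complex.normSq (mygram (f13 ψ) p) from
      (τ₂.trans e13).sum_comp (fun p => Complex.normSq (mygram (f13 ψ) p))] at this
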